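/- The RC equation of state satisfies the admissibility conditions: the function h(p,ρ) = (12p² + 8pρ + 2ρ²)/(3pρ + 2ρ²) on (0,∞)×(0,∞) satisfies, for all p, ρ > 0: (heq1) h(p,ρ) ≥ √(1 + p²/ρ²) + p/ρ, and (heq2) h(p,ρ)·(1/ρ − ∂h/∂p(p,ρ)) < ∂h/∂ρ(p,ρ) < 0. -/

import Mathlib

/-!
Splitting off `p / ρ`, one has `h = p / ρ + S` with `S = (9p² + 6pρ + 2ρ²) / (ρ (3p + 2ρ))`,
and `S² - (1 + p² / ρ²)` is a fraction with nonnegative coefficients, which gives (heq1).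
Both partial derivatives are explicit rational functions; after clearing denominators the two
inequalities of (heq2) become positivity of polynomials in `p, ρ` with positive coefficients.
-/

noncomputable section

/-- The RC EOS `h(p,ρ) = (12p² + 8pρ + 2ρ²)/(3pρ + 2ρ²)`. -/
def hRC (p ρ : ℝ) : ℝ := (12 * p ^ 2 + 8 * p * ρ + 2 * ρ ^ 2) / (3 * p * ρ + 2 * ρ ^ 2)

section

variable {p ρ : ℝ}

theorem hasDerivAt_hRC_left (hD : 3 * p * ρ + 2 * ρ ^ 2 ≠ 0) :
    HasDerivAt (fun p' => hRC p' ρ)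
      ((36 * p ^ 2 + 48 * p * ρ + 10 * ρ ^ 2) / (ρ * (3 * p + 2 * ρ) ^ 2)) p := by
  have hnum : HasDerivAt (fun x => 12 * x ^ 2 + 8 * x * ρ + 2 * ρ ^ 2) (24 * p + 8 * ρ) p :=
    ((((hasDerivAt_pow 2 p).const_mul 12).add
      (((hasDerivAt_id' p).const_mul 8).mul_const ρ)).add_const (2 * ρ ^ 2)).congr_deriv
      (by norm_num; ring)
  have hden : HasDerivAt (fun x => 3 * x * ρ + 2 * ρ ^ 2) (3 * ρ) p :=
    ((((hasDerivAt_id' p).const_mul 3).mul_const ρ).add_const _).congr_deriv (by ring)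
  refine (hnum.div hden hD).congr_deriv ?_
  field_simp
  ring

theorem hasDerivAt_hRC_right (hD : 3 * p * ρ + 2 * ρ ^ 2 ≠ 0) :
    HasDerivAt (fun ρ' => hRC p ρ')
      (-(p * (36 * p ^ 2 + 48 * p * ρ + 10 * ρ ^ 2)) / (ρ ^ 2 * (3 * p + 2 * ρ) ^ 2)) ρ := by
  have hnum : HasDerivAt (fun y => 12 * p ^ 2 + 8 * p * y + 2 * y ^ 2) (8 * p + 4 * ρ) ρ :=
    ((((hasDerivAt_id' ρ).const_mul (8 * p)).const_add _).add
      ((hasDerivAt_pow 2 ρ).const_mul 2)).congr_deriv (by norm_num; ring)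
  have hden : HasDerivAt (fun y => 3 * p * y + 2 * y ^ 2) (3 * p + 4 * ρ) ρ :=
    (((hasDerivAt_id' ρ).const_mul (3 * p)).add
      ((hasDerivAt_pow 2 ρ).const_mul 2)).congr_deriv (by norm_num; ring)
  refine (hnum.div hden hD).congr_deriv ?_
  field_simp
  ring

theorem sqrt_one_add_sq_div_add_div_le_hRC (hp : 0 ≤ p) (hρ : 0 < ρ) :
    √(1 + p ^ 2 / ρ ^ 2) + p / ρ ≤ hRC p ρ := by
  set S := (9 * p ^ 2 + 6 * p * ρ + 2 * ρ ^ 2) / (ρ * (3 * p + 2 * ρ)) with hS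
  have hsplit : hRC p ρ = S + p / ρ := by
    rw [hRC, hS]
    field_simp
    ring
  have hgap : S ^ 2 - (1 + p ^ 2 / ρ ^ 2) =
      (72 * p ^ 4 + 96 * p ^ 3 * ρ + 59 * p ^ 2 * ρ ^ 2 + 12 * p * ρ ^ 3)
        / (ρ ^ 2 * (3 * p + 2 * ρ) ^ 2) := by
    rw [hS]
    field_simp
    ring
  have hsqrt : √(1 + p ^ 2 / ρ ^ 2) ≤ S := by
    rw [Real.sqrt_le_iff]
    refine ⟨by positivity, sub_nonneg.mp ?_⟩
    rw [hgap]
    positivity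
  rw [hsplit]
  linarith

theorem hRC_mul_sub_deriv_lt_deriv (hp : 0 ≤ p) (hρ : 0 < ρ) :
    hRC p ρ * (1 / ρ - deriv (fun p' => hRC p' ρ) p) < deriv (fun ρ' => hRC p ρ') ρ := by
  have hD : 3 * p * ρ + 2 * ρ ^ 2 ≠ 0 := by positivity
  rw [(hasDerivAt_hRC_left hD).deriv, (hasDerivAt_hRC_right hD).deriv, ← sub_pos]
  have hgap : -(p * (36 * p ^ 2 + 48 * p * ρ + 10 * ρ ^ 2)) / (ρ ^ 2 * (3 * p + 2 * ρ) ^ 2)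
      - hRC p ρ * (1 / ρ - (36 * p ^ 2 + 48 * p * ρ + 10 * ρ ^ 2) / (ρ * (3 * p + 2 * ρ) ^ 2))
      = (216 * p ^ 4 + 432 * p ^ 3 * ρ + 288 * p ^ 2 * ρ ^ 2 + 100 * p * ρ ^ 3 + 12 * ρ ^ 4)
        / (ρ ^ 2 * (3 * p + 2 * ρ) ^ 3) := by
    rw [hRC]
    field_simp
    ring
  rw [hgap]
  positivity

theorem deriv_hRC_right_neg (hp : 0 < p) (hρ : 0 < ρ) :
    deriv (fun ρ' => hRC p ρ') ρ < 0 := by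
  rw [(hasDerivAt_hRC_right (by positivity)).deriv]
  exact div_neg_of_neg_of_pos (neg_neg_of_pos (by positivity)) (by positivity)

end

/-- The RC EOS satisfies (heq1) and (heq2). -/
theorem rcEOS_admissible (p ρ : ℝ) (hp : 0 < p) (hρ : 0 < ρ) :
    Real.sqrt (1 + p ^ 2 / ρ ^ 2) + p / ρ ≤ hRC p ρ ∧
    hRC p ρ * (1 / ρ - deriv (fun p' => hRC p' ρ) p) < deriv (fun ρ' => hRC p ρ') ρ ∧
    deriv (fun ρ' => hRC p ρ') ρ < 0 :=
  ⟨sqrt_one_add_sq_div_add_div_le_hRC hp.le hρ, hRC_mul_sub_deriv_lt_deriv hp.le hρ,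
    deriv_hRC_right_neg hp hρ⟩
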